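/- (Dynamic Duality in distribution.) Let ε have i.i.d. standard Gaussian coordinates, let 0 < γ_t ≤ γ_s < 1, and for each γ ∈ {γ_t, γ_s} set r = F_Y^{-1}(γ), α̃ = r/√(1+r²), σ̃ = 1/√(1+r²), and w(γ) = α̃·e_k + σ̃·ε (same ε for both). Then the joint law of the pair (P(w(γ_t)), P(w(γ_s))) equals the joint law of (Mask(x0, u, γ_t), Mask(x0, u, γ_s)) where u is uniformly distributed on [0,1]; in particular P(both = x0) = γ_t, P(first = e_K, second = x0) = γ_s − γ_t, P(both = e_K) = 1 − γ_s, and P(first = x0, second = e_K) = 0. -/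

import Mathlib

/-!
Everything is driven by the scalar `Y = max_{j ≠ k} ε_j - ε_k`. Since `wCal k r ε` rescales `ε`
by `σ̃ > 0` and adds `σ̃ r` to the `k`-th coordinate, `proj (wCal k r ε) = e_k` exactly when
`Y < r`. The law of `Y` has no atoms (on `{Y = r}` some difference `ε_j - ε_k` of independent
Gaussians equals `r`), so `P(Y < r) = F_Y(r)`. Hence the two events `{Y < r_t}` and `{Y < r_s}`
have masses `γ_t` and `γ_s` and their intersection has mass `γ_t`, just like `{u ≤ γ_t}` and
`{u ≤ γ_s}` for uniform `u`; the joint law of two two-valued variables is fixed by the masses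
of the four cells.
-/


open MeasureTheory ProbabilityTheory

noncomputable section

/-- The maximum of the coordinates of `w` over all indices `j ≠ k`. -/
def maxOther {K : ℕ} (hK : 2 ≤ K) (k : Fin K) (w : Fin K → ℝ) : ℝ :=
  (Finset.univ.erase k).sup'
    (by
      apply Finset.card_pos.mp
      rw [Finset.card_erase_of_mem (Finset.mem_univ k), Finset.card_univ, Fintype.card_fin]
      omega) w

/-- The index of the mask state `[M]` (the last coordinate). -/
def maskIdx {K : ℕ} (hK : 2 ≤ K) : Fin K := ⟨K - 1, by omega⟩

/-- The projection operator `P`: it keeps the clean one-hot vector `x0 = e_k` if the signal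
coordinate strictly dominates all other coordinates, otherwise collapses to the mask
vector `e_K`. -/
def proj {K : ℕ} (hK : 2 ≤ K) (k : Fin K) (w : Fin K → ℝ) : Fin K → ℝ :=
  if maxOther hK k w < w k then Pi.single k 1 else Pi.single (maskIdx hK) 1

/-- The `K`-fold product of standard Gaussian measures: the law of `ε` with i.i.d.
standard Gaussian `N(0,1)` coordinates. -/
def gpi (K : ℕ) : Measure (Fin K → ℝ) :=
  Measure.pi fun _ => gaussianReal 0 1

/-- The scalar `Y(ε) = max_{j ≠ k} ε_j − ε_k`. -/
def Yfun {K : ℕ} (hK : 2 ≤ K) (k : Fin K) (ε : Fin K → ℝ) : ℝ :=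
  maxOther hK k ε - ε k

/-- `F_Y`, the cumulative distribution function of `Y = max_{j ≠ k} ε_j − ε_k` for `ε` with
i.i.d. standard Gaussian coordinates. -/
def FY {K : ℕ} (hK : 2 ≤ K) (k : Fin K) : ℝ → ℝ :=
  fun y => cdf ((gpi K).map (Yfun hK k)) y

/-- The scalar masking operator: `Mask(x0, u, γ) = e_K` (mask) if `u > γ`, `x0` otherwise. -/
def maskOp {α : Type*} (x0 eM : α) (u γ : ℝ) : α :=
  if γ < u then eM else x0

/-- The calibrated latent state `w = (r/√(1+r²)) • e_k + (1/√(1+r²)) • ε`. -/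
def wCal {K : ℕ} (k : Fin K) (r : ℝ) (ε : Fin K → ℝ) : Fin K → ℝ :=
  (r / Real.sqrt (1 + r ^ 2)) • (Pi.single k 1 : Fin K → ℝ)
    + (1 / Real.sqrt (1 + r ^ 2)) • ε

open Set

section GeneralMeasureTheory

variable {α β X : Type*}

lemma preimage_decide_mem_prod_singleton {S T : Set α} [DecidablePred (· ∈ S)]
    [DecidablePred (· ∈ T)] (b₁ b₂ : Bool) :
    (fun a => (decide (a ∈ S), decide (a ∈ T))) ⁻¹' {(b₁, b₂)}
      = (if b₁ then S else Sᶜ) ∩ (if b₂ then T else Tᶜ) := by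
  ext a; cases b₁ <;> cases b₂ <;> simp

variable [MeasurableSpace α] [MeasurableSpace β] [MeasurableSpace X]

lemma ProbabilityTheory.IndepFun.measure_sub_eq_const_eq_zero {μ : Measure α} [IsFiniteMeasure μ]
    {f g : α → ℝ} (hf : Measurable f) (hg : Measurable g) (hfg : IndepFun f g μ)
    [NullSingletonClass (μ.map f)] (r : ℝ) : μ {a | f a - g a = r} = 0 := by
  have hS : MeasurableSet {p : ℝ × ℝ | p.1 - p.2 = r} :=
    measurableSet_eq_fun (by fun_prop) measurable_const
  have hslice (y : ℝ) : (fun x => (x, y)) ⁻¹' {p : ℝ × ℝ | p.1 - p.2 = r} = {r + y} := by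
    ext x; simp [sub_eq_iff_eq_add]
  rw [show {a | f a - g a = r} = (fun a => (f a, g a)) ⁻¹' {p | p.1 - p.2 = r} from rfl,
    ← Measure.map_apply (hf.prodMk hg) hS,
    hfg.map_prod_eq_prod_map_map hf.aemeasurable hg.aemeasurable, Measure.prod_apply_symm hS]
  simp [hslice]

lemma measure_lt_eq_ofReal_cdf {μ : Measure α} [IsProbabilityMeasure μ] {f : α → ℝ}
    (hf : Measurable f) [NullSingletonClass (μ.map f)] (r : ℝ) :
    μ {a | f a < r} = ENNReal.ofReal (cdf (μ.map f) r) := by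
  have := Measure.isProbabilityMeasure_map (μ := μ) hf.aemeasurable
  rw [ofReal_cdf, ← measure_congr Iio_ae_eq_Iic, Measure.map_apply hf measurableSet_Iio]
  rfl

lemma measure_sdiff_eq_sub_inter {μ : Measure α} [IsFiniteMeasure μ] (s : Set α) {t : Set α}
    (ht : MeasurableSet t) : μ (s \ t) = μ s - μ (s ∩ t) :=
  ENNReal.eq_sub_of_add_eq (measure_ne_top μ _) (measure_sdiff_add_inter s ht)

lemma measure_cells_of_inter_eq {μ : Measure α} [IsProbabilityMeasure μ] {A B : Set α}
    (hA : MeasurableSet A) (hB : MeasurableSet B) {p q : ℝ} (hp : 0 ≤ p) (hpq : p ≤ q)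
    (hAμ : μ A = .ofReal p) (hBμ : μ B = .ofReal q) (hABμ : μ (A ∩ B) = .ofReal p) :
    μ (A ∩ Bᶜ) = 0 ∧ μ (Aᶜ ∩ B) = .ofReal (q - p) ∧ μ (Aᶜ ∩ Bᶜ) = .ofReal (1 - q) := by
  have hAB : μ (A \ B) = 0 := by rw [measure_sdiff_eq_sub_inter A hB, hABμ, hAμ, tsub_self]
  have hBA : μ (B \ A) = .ofReal (q - p) := by
    rw [measure_sdiff_eq_sub_inter B hA, inter_comm, hABμ, hBμ, ENNReal.ofReal_sub _ hp]
  have hAuB : μ (A ∪ B) = .ofReal q := by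
    rw [← sdiff_union_self, measure_union disjoint_sdiff_left hB, hAB, zero_add, hBμ]
  refine ⟨hAB, by rwa [inter_comm, ← sdiff_eq], ?_⟩
  rw [← compl_union, prob_compl_eq_one_sub (hA.union hB), hAuB, ← ENNReal.ofReal_one,
    ← ENNReal.ofReal_sub _ (hp.trans hpq)]

lemma measurable_decide_mem_prod {S T : Set α} [DecidablePred (· ∈ S)] [DecidablePred (· ∈ T)]
    (hS : MeasurableSet S) (hT : MeasurableSet T) :
    Measurable fun a => (decide (a ∈ S), decide (a ∈ T)) :=
  (measurable_to_bool (by convert hS; ext; simp)).prodMk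
    (measurable_to_bool (by convert hT; ext; simp))

lemma map_ite_prod_eq_of_measure_cells {μ : Measure α} {ν : Measure β} {A B : Set α}
    {C D : Set β} [DecidablePred (· ∈ A)] [DecidablePred (· ∈ B)] [DecidablePred (· ∈ C)]
    [DecidablePred (· ∈ D)] (hA : MeasurableSet A) (hB : MeasurableSet B)
    (hC : MeasurableSet C) (hD : MeasurableSet D)
    (h₁ : μ (A ∩ B) = ν (C ∩ D)) (h₂ : μ (A ∩ Bᶜ) = ν (C ∩ Dᶜ))
    (h₃ : μ (Aᶜ ∩ B) = ν (Cᶜ ∩ D)) (h₄ : μ (Aᶜ ∩ Bᶜ) = ν (Cᶜ ∩ Dᶜ)) (x y : X) :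
    μ.map (fun a => (if a ∈ A then x else y, if a ∈ B then x else y))
      = ν.map (fun b => (if b ∈ C then x else y, if b ∈ D then x else y)) := by
  let g (p : Bool × Bool) : X × X := (cond p.1 x y, cond p.2 x y)
  have hg : Measurable g := measurable_of_countable g
  have hAB := measurable_decide_mem_prod hA hB
  have hCD := measurable_decide_mem_prod hC hD
  have hF : (fun a => (if a ∈ A then x else y, if a ∈ B then x else y))
      = g ∘ fun a => (decide (a ∈ A), decide (a ∈ B)) := by
    funext a; simp [g, Bool.cond_decide]
  have hG : (fun b => (if b ∈ C then x else y, if b ∈ D then x else y))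
      = g ∘ fun b => (decide (b ∈ C), decide (b ∈ D)) := by
    funext b; simp [g, Bool.cond_decide]
  rw [hF, hG, ← Measure.map_map hg hAB, ← Measure.map_map hg hCD]
  congr 1
  refine Measure.ext_iff_singleton.2 fun ⟨b₁, b₂⟩ => ?_
  rw [Measure.map_apply hAB (measurableSet_singleton _),
    Measure.map_apply hCD (measurableSet_singleton _), preimage_decide_mem_prod_singleton,
    preimage_decide_mem_prod_singleton]
  cases b₁ <;> cases b₂ <;> assumption

end GeneralMeasureTheory

instance (K : ℕ) : IsProbabilityMeasure (gpi K) := by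
  unfold gpi; infer_instance

lemma gpi_sub_eq_const_eq_zero {K : ℕ} {j k : Fin K} (hjk : j ≠ k) (r : ℝ) :
    gpi K {ε | ε j - ε k = r} = 0 := by
  have hind : IndepFun (fun ε : Fin K → ℝ => ε j) (fun ε => ε k) (gpi K) :=
    (iIndepFun_pi (X := fun _ => id) fun _ => aemeasurable_id).indepFun hjk
  have : NullSingletonClass ((gpi K).map fun ε => ε j) := by
    rw [show (gpi K).map (fun ε => ε j) = gaussianReal 0 1 from
      (measurePreserving_eval _ j).map_eq]
    exact nullSingletonClass_gaussianReal one_ne_zero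
  exact hind.measure_sub_eq_const_eq_zero (measurable_pi_apply j) (measurable_pi_apply k) r

section Projection

variable {K : ℕ} (hK : 2 ≤ K) (k : Fin K)

lemma maxOther_lt_iff {w : Fin K → ℝ} {a : ℝ} : maxOther hK k w < a ↔ ∀ j ≠ k, w j < a := by
  simp [maxOther, Finset.sup'_lt_iff]

lemma exists_maxOther_eq (w : Fin K → ℝ) : ∃ j ≠ k, maxOther hK k w = w j := by
  unfold maxOther
  exact (Finset.exists_mem_eq_sup' _ w).imp fun j hj => ⟨Finset.ne_of_mem_erase hj.1, hj.2⟩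

lemma measurable_maxOther : Measurable (maxOther hK k) :=
  (Continuous.finset_sup'_apply _ fun j _ => continuous_apply j).measurable

lemma measurable_Yfun : Measurable (Yfun hK k) :=
  (measurable_maxOther hK k).sub (measurable_pi_apply k)

instance : NullSingletonClass ((gpi K).map (Yfun hK k)) := by
  refine ⟨fun r => ?_⟩
  rw [Measure.map_apply (measurable_Yfun hK k) (measurableSet_singleton r)]
  refine measure_mono_null (t := ⋃ (j) (_ : j ≠ k), {ε | ε j - ε k = r}) ?_
    (measure_iUnion_null fun j => measure_iUnion_null fun hj => gpi_sub_eq_const_eq_zero hj r)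
  intro ε hε
  obtain ⟨j, hj, h⟩ := exists_maxOther_eq hK k ε
  exact mem_biUnion (x := j) hj (by simpa [Yfun, h] using hε)

lemma gpi_Yfun_lt (r : ℝ) : gpi K {ε | Yfun hK k ε < r} = ENNReal.ofReal (FY hK k r) :=
  measure_lt_eq_ofReal_cdf (measurable_Yfun hK k) r

lemma monotone_FY : Monotone (FY hK k) := monotone_cdf _

lemma proj_wCal (r : ℝ) (ε : Fin K → ℝ) :
    proj hK k (wCal k r ε)
      = if Yfun hK k ε < r then Pi.single k 1 else Pi.single (maskIdx hK) 1 := by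
  have key : maxOther hK k (wCal k r ε) < wCal k r ε k ↔ Yfun hK k ε < r := by
    rw [Yfun, sub_lt_iff_lt_add', maxOther_lt_iff, maxOther_lt_iff]
    refine forall₂_congr fun j hj => ?_
    simp only [wCal, Pi.add_apply, Pi.smul_apply, Pi.single_eq_same, Pi.single_eq_of_ne hj,
      smul_eq_mul, mul_zero, mul_one, zero_add, div_eq_inv_mul, ← mul_add]
    rw [mul_lt_mul_iff_right₀ (by positivity), add_comm]
  simp only [proj, key]

end Projection

instance : IsProbabilityMeasure (volume.restrict (Icc (0 : ℝ) 1)) :=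
  ⟨by simp⟩

lemma volume_restrict_Icc_Iic {γ : ℝ} (h1 : γ ≤ 1) :
    volume.restrict (Icc (0 : ℝ) 1) (Iic γ) = .ofReal γ := by
  have : Iic γ ∩ Icc 0 1 = Icc 0 γ := by
    ext x; simp only [mem_inter_iff, mem_Iic, mem_Icc]; grind
  rw [Measure.restrict_apply measurableSet_Iic, this, Real.volume_Icc, sub_zero]

lemma maskOp_eq_ite {α : Type*} (x0 eM : α) (u γ : ℝ) :
    maskOp x0 eM u γ = if u ≤ γ then x0 else eM := by
  unfold maskOp; split_ifs <;> first | rfl | linarith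

theorem stmt15_general (K : ℕ) (hK : 2 ≤ K) (k : Fin K) (hk : k ≠ maskIdx hK)
    (γt γs : ℝ) (hts : γt ≤ γs)
    (rt rs : ℝ) (hrt : FY hK k rt = γt) (hrs : FY hK k rs = γs) :
    (gpi K).map (fun ε => (proj hK k (wCal k rt ε), proj hK k (wCal k rs ε)))
      = (volume.restrict (Set.Icc (0 : ℝ) 1)).map
          (fun u => (maskOp (Pi.single k 1 : Fin K → ℝ)
              (Pi.single (maskIdx hK) 1 : Fin K → ℝ) u γt,
            maskOp (Pi.single k 1 : Fin K → ℝ)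
              (Pi.single (maskIdx hK) 1 : Fin K → ℝ) u γs))
    ∧ gpi K {ε | proj hK k (wCal k rt ε) = (Pi.single k 1 : Fin K → ℝ)
        ∧ proj hK k (wCal k rs ε) = (Pi.single k 1 : Fin K → ℝ)}
      = ENNReal.ofReal γt
    ∧ gpi K {ε | proj hK k (wCal k rt ε) = (Pi.single (maskIdx hK) 1 : Fin K → ℝ)
        ∧ proj hK k (wCal k rs ε) = (Pi.single k 1 : Fin K → ℝ)}
      = ENNReal.ofReal (γs - γt)
    ∧ gpi K {ε | proj hK k (wCal k rt ε) = (Pi.single (maskIdx hK) 1 : Fin K → ℝ)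
        ∧ proj hK k (wCal k rs ε) = (Pi.single (maskIdx hK) 1 : Fin K → ℝ)}
      = ENNReal.ofReal (1 - γs)
    ∧ gpi K {ε | proj hK k (wCal k rt ε) = (Pi.single k 1 : Fin K → ℝ)
        ∧ proj hK k (wCal k rs ε) = (Pi.single (maskIdx hK) 1 : Fin K → ℝ)}
      = 0 := by
  have hne : (Pi.single k 1 : Fin K → ℝ) ≠ Pi.single (maskIdx hK) 1 := fun h => by
    simpa [hk] using congrFun h k
  have hγt : 0 ≤ γt := hrt ▸ cdf_nonneg _ _
  have hγs : γs ≤ 1 := hrs ▸ cdf_le_one _ _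
  set A := {ε | Yfun hK k ε < rt}
  set B := {ε | Yfun hK k ε < rs}
  have hA : MeasurableSet A := measurableSet_lt (measurable_Yfun hK k) measurable_const
  have hB : MeasurableSet B := measurableSet_lt (measurable_Yfun hK k) measurable_const
  have hAB : gpi K (A ∩ B) = .ofReal γt := by
    rw [show A ∩ B = {ε | Yfun hK k ε < min rt rs} by ext; simp [A, B], gpi_Yfun_lt,
      (monotone_FY hK k).map_min, hrt, hrs, min_eq_left hts]
  obtain ⟨hTF, hFT, hFF⟩ := measure_cells_of_inter_eq hA hB hγt hts
    (by rw [gpi_Yfun_lt, hrt]) (by rw [gpi_Yfun_lt, hrs]) hAB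
  have hCD : volume.restrict (Icc (0 : ℝ) 1) (Iic γt ∩ Iic γs) = .ofReal γt := by
    rw [Iic_inter_Iic, min_eq_left hts, volume_restrict_Icc_Iic (hts.trans hγs)]
  obtain ⟨hTF', hFT', hFF'⟩ := measure_cells_of_inter_eq measurableSet_Iic measurableSet_Iic
    hγt hts (volume_restrict_Icc_Iic (hts.trans hγs)) (volume_restrict_Icc_Iic hγs) hCD
  simp only [proj_wCal, maskOp_eq_ite]
  refine ⟨map_ite_prod_eq_of_measure_cells hA hB measurableSet_Iic measurableSet_Iic
    (hAB.trans hCD.symm) (hTF.trans hTF'.symm) (hFT.trans hFT'.symm) (hFF.trans hFF'.symm) _ _,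
    ?_, ?_, ?_, ?_⟩ <;>
  simpa only [ite_eq_left_iff, ite_eq_right_iff, hne, hne.symm, imp_false, not_not]

/-- Dynamic Duality in distribution: For `ε` i.i.d. standard Gaussian,
`0 < γ_t ≤ γ_s < 1`, and `w(γ) = α̃ • e_k + σ̃ • ε` with `r = F_Y⁻¹(γ)`,
`α̃ = r/√(1+r²)`, `σ̃ = 1/√(1+r²)` (same `ε` for both levels), the joint law of
`(P(w(γ_t)), P(w(γ_s)))` equals the joint law of `(Mask(x0,u,γ_t), Mask(x0,u,γ_s))` for
`u` uniform on `[0,1]`; in particular `P(both = x0) = γ_t`,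
`P(first = e_K, second = x0) = γ_s − γ_t`, `P(both = e_K) = 1 − γ_s`, and
`P(first = x0, second = e_K) = 0`. -/
theorem stmt15 (K : ℕ) (hK : 2 ≤ K) (k : Fin K) (hk : k ≠ maskIdx hK)
    (γt γs : ℝ) (h0 : 0 < γt) (hts : γt ≤ γs) (hs1 : γs < 1)
    (rt rs : ℝ) (hrt : FY hK k rt = γt) (hrs : FY hK k rs = γs) :
    (gpi K).map (fun ε => (proj hK k (wCal k rt ε), proj hK k (wCal k rs ε)))
      = (volume.restrict (Set.Icc (0 : ℝ) 1)).map
          (fun u => (maskOp (Pi.single k 1 : Fin K → ℝ)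
              (Pi.single (maskIdx hK) 1 : Fin K → ℝ) u γt,
            maskOp (Pi.single k 1 : Fin K → ℝ)
              (Pi.single (maskIdx hK) 1 : Fin K → ℝ) u γs))
    ∧ gpi K {ε | proj hK k (wCal k rt ε) = (Pi.single k 1 : Fin K → ℝ)
        ∧ proj hK k (wCal k rs ε) = (Pi.single k 1 : Fin K → ℝ)}
      = ENNReal.ofReal γt
    ∧ gpi K {ε | proj hK k (wCal k rt ε) = (Pi.single (maskIdx hK) 1 : Fin K → ℝ)
        ∧ proj hK k (wCal k rs ε) = (Pi.single k 1 : Fin K → ℝ)}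
      = ENNReal.ofReal (γs - γt)
    ∧ gpi K {ε | proj hK k (wCal k rt ε) = (Pi.single (maskIdx hK) 1 : Fin K → ℝ)
        ∧ proj hK k (wCal k rs ε) = (Pi.single (maskIdx hK) 1 : Fin K → ℝ)}
      = ENNReal.ofReal (1 - γs)
    ∧ gpi K {ε | proj hK k (wCal k rt ε) = (Pi.single k 1 : Fin K → ℝ)
        ∧ proj hK k (wCal k rs ε) = (Pi.single (maskIdx hK) 1 : Fin K → ℝ)}
      = 0 :=
  stmt15_general K hK k hk γt γs hts rt rs hrt hrs
end
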